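/- For the time evolution U(t) = exp(−i H_R t) with H_R = (1/4)·[[g_zz,0,0,0],[0,−g_zz,g_yy,0],[0,g_yy,−g_zz,0],[0,0,0,g_zz]] (i.e., Δ = 0), the average-fidelity error E(g_zz) = 1 − (|Tr(V†U(π/g_yy))|² + 4)/20, with V = SQiSW†, satisfies E(g_zz) = (π²/20)·(g_zz/g_yy)² + O((g_zz/g_yy)⁴) as g_zz/g_yy → 0. -/

import Mathlib

/-!
In the eigenbasis |00⟩, |01⟩ + |10⟩, |01⟩ - |10⟩, |11⟩ of the YY coupling both `H_R` and
V = SQiSW† are diagonal. Over the time π / g_yy the YY phases e^{∓iπ/4} of U cancel those of V†,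
so only the ZZ phases e^{∓iθ}, θ = π g_zz / (4 g_yy), survive: Tr(V†U) = 4 cos θ and
E = (4/5) sin² θ. Finally |sin² θ - θ²| ≤ θ⁴ / 3 and (4/5) θ² = (π²/20)(g_zz/g_yy)².
-/

open Complex Matrix Asymptotics

noncomputable def HR (gyy gzz : ℝ) : Matrix (Fin 4) (Fin 4) ℂ :=
  ((1 : ℂ) / 4) • !![(gzz : ℂ), 0, 0, 0;
                     0, -(gzz : ℂ), (gyy : ℂ), 0;
                     0, (gyy : ℂ), -(gzz : ℂ), 0;
                     0, 0, 0, (gzz : ℂ)]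

noncomputable def SQiSWdag : Matrix (Fin 4) (Fin 4) ℂ :=
  !![1, 0, 0, 0;
     0, 1 / Real.sqrt 2, -I / Real.sqrt 2, 0;
     0, -I / Real.sqrt 2, 1 / Real.sqrt 2, 0;
     0, 0, 0, 1]

noncomputable def Egate (gyy gzz : ℝ) : ℝ :=
  1 - ((‖(SQiSWdagᴴ *
      NormedSpace.exp ((-(I * ((Real.pi : ℝ) / gyy))) • HR gyy gzz)).trace‖) ^ 2 + 4) / 20

open scoped Real

theorem abs_sin_sq_sub_sq_le (t : ℝ) : |Real.sin t ^ 2 - t ^ 2| ≤ t ^ 4 / 3 := by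
  have hsum : |t + Real.sin t| ≤ 2 * |t| :=
    (abs_add_le _ _).trans (by linarith [Real.abs_sin_le_abs (x := t)])
  calc |Real.sin t ^ 2 - t ^ 2| = |t - Real.sin t| * |t + Real.sin t| := by
        rw [← abs_mul, ← abs_neg]; ring_nf
    _ ≤ |t| ^ 3 / 6 * (2 * |t|) := by gcongr; exact Real.abs_sub_sin_le t
    _ = |t| ^ 4 / 3 := by ring
    _ = t ^ 4 / 3 := by rw [Even.pow_abs (by decide)]

section ConjDiagonal

variable {m : Type*} [Fintype m] [DecidableEq m]

theorem trace_conj_diagonal_mul_conj_diagonal {R : Type*} [CommRing R] {P Q : Matrix m m R}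
    (hQP : Q * P = 1) (a b : m → R) :
    trace (P * diagonal a * Q * (P * diagonal b * Q)) = ∑ i, a i * b i := by
  calc trace (P * diagonal a * Q * (P * diagonal b * Q))
      = trace (P * (diagonal a * (Q * P) * diagonal b) * Q) := by
        simp only [Matrix.mul_assoc]
    _ = trace (Q * P * (diagonal a * diagonal b)) := by
        rw [trace_mul_cycle, hQP, Matrix.mul_one]
    _ = ∑ i, a i * b i := by
        rw [hQP, Matrix.one_mul, diagonal_mul_diagonal, trace_diagonal]

theorem exp_smul_conj_diagonal {P Q : Matrix m m ℂ} (hQP : Q * P = 1) (d : m → ℂ) (s : ℂ) :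
    NormedSpace.exp (s • (P * diagonal d * Q))
      = P * diagonal (fun i => Complex.exp (s * d i)) * Q := by
  have hP : IsUnit P := (isUnit_iff_isUnit_det P).mpr (isUnit_det_of_left_inverse hQP)
  rw [← inv_eq_left_inv hQP, ← Matrix.smul_mul, ← Matrix.mul_smul, ← diagonal_smul,
    Matrix.exp_conj _ _ hP, Matrix.exp_diagonal, Complex.exp_eq_exp_ℂ, Pi.exp_def]
  rfl

end ConjDiagonal

def yyEigenbasis : Matrix (Fin 4) (Fin 4) ℂ :=
  !![1, 0, 0, 0; 0, 1, 1, 0; 0, 1, -1, 0; 0, 0, 0, 1]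

noncomputable def yyEigenbasisInv : Matrix (Fin 4) (Fin 4) ℂ :=
  !![1, 0, 0, 0; 0, 1 / 2, 1 / 2, 0; 0, 1 / 2, -1 / 2, 0; 0, 0, 0, 1]

theorem yyEigenbasisInv_mul_yyEigenbasis : yyEigenbasisInv * yyEigenbasis = 1 := by
  ext i j
  fin_cases i <;> fin_cases j <;>
    simp [yyEigenbasis, yyEigenbasisInv, mul_apply, Fin.sum_univ_four] <;> norm_num

theorem HR_eq_conj_diagonal (gyy gzz : ℝ) :
    HR gyy gzz = yyEigenbasis
      * diagonal ![(gzz : ℂ) / 4, (gyy - gzz) / 4, (-gyy - gzz) / 4, gzz / 4] * yyEigenbasisInv := by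
  ext i j
  fin_cases i <;> fin_cases j <;>
    simp [HR, yyEigenbasis, yyEigenbasisInv, mul_apply, Fin.sum_univ_four, vecMul_diagonal] <;>
    ring

theorem ofReal_sqrt_two_mul_self : (√2 : ℂ) * √2 = 2 := by
  exact_mod_cast Real.mul_self_sqrt zero_le_two

theorem exp_pi_div_four_mul_I : Complex.exp (π / 4 * I) = (1 + I) / √2 := by
  rw [← ofReal_ofNat, ← ofReal_div, exp_mul_I, ← ofReal_cos, ← ofReal_sin, Real.cos_pi_div_four,
    Real.sin_pi_div_four, eq_div_iff (by simp)]
  push_cast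
  linear_combination (1 + I) / 2 * ofReal_sqrt_two_mul_self

theorem exp_neg_pi_div_four_mul_I : Complex.exp (-(π / 4 * I)) = (1 - I) / √2 := by
  rw [← neg_mul, ← ofReal_ofNat, ← ofReal_div, ← ofReal_neg, exp_mul_I, ← ofReal_cos,
    ← ofReal_sin, Real.cos_neg, Real.sin_neg, Real.cos_pi_div_four, Real.sin_pi_div_four,
    eq_div_iff (by simp)]
  push_cast
  linear_combination (1 - I) / 2 * ofReal_sqrt_two_mul_self

theorem SQiSWdag_conjTranspose_eq_conj_diagonal :
    SQiSWdagᴴ = yyEigenbasis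
      * diagonal ![1, Complex.exp (π / 4 * I), Complex.exp (-(π / 4 * I)), 1] * yyEigenbasisInv := by
  rw [exp_pi_div_four_mul_I, exp_neg_pi_div_four_mul_I]
  ext i j
  fin_cases i <;> fin_cases j <;>
    simp [SQiSWdag, yyEigenbasis, yyEigenbasisInv, mul_apply, Fin.sum_univ_four, vecMul_diagonal] <;>
    ring

theorem trace_SQiSWdag_conjTranspose_mul_exp {gyy : ℝ} (hg : gyy ≠ 0) (gzz : ℝ) :
    (SQiSWdagᴴ * NormedSpace.exp ((-(I * ((π : ℝ) / gyy))) • HR gyy gzz)).trace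
      = ((4 * Real.cos (π / 4 * (gzz / gyy)) : ℝ) : ℂ) := by
  rw [HR_eq_conj_diagonal, exp_smul_conj_diagonal yyEigenbasisInv_mul_yyEigenbasis,
    SQiSWdag_conjTranspose_eq_conj_diagonal,
    trace_conj_diagonal_mul_conj_diagonal yyEigenbasisInv_mul_yyEigenbasis, Fin.sum_univ_four]
  simp only [cons_val, ← Complex.exp_add, one_mul]
  set θ : ℂ := π / 4 * (gzz / gyy) with hθ
  have hg' : (gyy : ℂ) ≠ 0 := ofReal_ne_zero.mpr hg
  have hzz : -(I * (π / gyy)) * (gzz / 4) = -θ * I := by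
    rw [hθ]; field_simp
  have hyy₁ : π / 4 * I + -(I * (π / gyy)) * ((gyy - gzz) / 4) = θ * I := by
    rw [hθ]; field_simp; ring
  have hyy₂ : -(π / 4 * I) + -(I * (π / gyy)) * ((-gyy - gzz) / 4) = θ * I := by
    rw [hθ]; field_simp; ring
  rw [hzz, hyy₁, hyy₂, ofReal_mul, ofReal_cos, Complex.cos]
  push_cast
  ring

theorem Egate_eq_sin_sq {gyy : ℝ} (hg : gyy ≠ 0) (gzz : ℝ) :
    Egate gyy gzz = 4 / 5 * Real.sin (π / 4 * (gzz / gyy)) ^ 2 := by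
  rw [Egate, trace_SQiSWdag_conjTranspose_mul_exp hg, norm_real, Real.norm_eq_abs, sq_abs]
  linarith [Real.sin_sq_add_cos_sq (π / 4 * (gzz / gyy))]

/-- E(g_zz) = (π²/20)·(g_zz/g_yy)² + O((g_zz/g_yy)⁴) as g_zz → 0. -/
theorem error_quadratic_in_gzz (gyy : ℝ) (hg : 0 < gyy) :
    (fun gzz : ℝ => Egate gyy gzz - (Real.pi ^ 2 / 20) * (gzz / gyy) ^ 2) =O[nhds 0]
      fun gzz : ℝ => (gzz / gyy) ^ 4 := by
  refine IsBigO.of_bound (π ^ 4 / 960) (Filter.Eventually.of_forall fun gzz => ?_)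
  rw [Egate_eq_sin_sq hg.ne', Real.norm_eq_abs, Real.norm_eq_abs,
    abs_of_nonneg (by positivity : 0 ≤ (gzz / gyy) ^ 4)]
  calc |4 / 5 * Real.sin (π / 4 * (gzz / gyy)) ^ 2 - π ^ 2 / 20 * (gzz / gyy) ^ 2|
      = 4 / 5 * |Real.sin (π / 4 * (gzz / gyy)) ^ 2 - (π / 4 * (gzz / gyy)) ^ 2| := by
        rw [← abs_of_pos (by norm_num : (0 : ℝ) < 4 / 5), ← abs_mul]; ring_nf
    _ ≤ 4 / 5 * ((π / 4 * (gzz / gyy)) ^ 4 / 3) := by gcongr; exact abs_sin_sq_sub_sq_le _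
    _ = π ^ 4 / 960 * (gzz / gyy) ^ 4 := by ring
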